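/- arXiv:1501.03907 — 2 statements merged into one kernel-verified Lean document; each statement's English description precedes it below -/
import Mathlib

section
/- Let k ≥ 3 be an integer, let C be a k-rotationally symmetric planar convex body with inradius r and circumradius R, and let P be any k-partition of C, i.e. connected subsets C₁, …, C_k of C whose union is C, whose interiors are pairwise disjoint, and which all contain a common point c ∈ int(C). Then the maximum relative diameter of P is at least that of the standard k-partition: d_M(P) = max_{1≤i≤k} diam(C_i) ≥ max{R, 2·r·sin(π/k)} = d_M(P_k). In other words, the standard k-partition is a minimizing k-partition for the maximum relative diameter. -/
open Metric Set

/-- Rotation of the plane (identified with `ℂ`) about the point `p` by angle `2π/k`. -/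
noncomputable def planeRotation (k : ℕ) (p z : ℂ) : ℂ :=
  p + Complex.exp (2 * (Real.pi : ℂ) * Complex.I / (k : ℂ)) * (z - p)

/-- A `k`-rotationally symmetric planar convex body with center of symmetry `p`. -/
def IsRotSymConvexBody (k : ℕ) (p : ℂ) (C : Set ℂ) : Prop :=
  IsCompact C ∧ Convex ℝ C ∧ (interior C).Nonempty ∧ planeRotation k p '' C = C

/-- The inradius of a planar set. -/
noncomputable def inradius (C : Set ℂ) : ℝ :=
  sSup {r : ℝ | ∃ c : ℂ, closedBall c r ⊆ C}

/-- The circumradius of a planar set. -/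
noncomputable def circumradius (C : Set ℂ) : ℝ :=
  sInf {R : ℝ | ∃ c : ℂ, C ⊆ closedBall c R}

/-- A `k`-subdivision of `C`: `k` connected subsets of `C` covering `C`,
with pairwise disjoint interiors. -/
def IsSubdivision (C : Set ℂ) (k : ℕ) (P : Fin k → Set ℂ) : Prop :=
  (∀ i, P i ⊆ C) ∧ (∀ i, IsConnected (P i)) ∧ (⋃ i, P i) = C ∧
    ∀ i j, i ≠ j → interior (P i) ∩ interior (P j) = ∅

/-- A `k`-partition of `C`: a `k`-subdivision all of whose pieces share a common
point `c` lying in the interior of `C`. -/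
def IsPartition (C : Set ℂ) (k : ℕ) (P : Fin k → Set ℂ) (c : ℂ) : Prop :=
  IsSubdivision C k P ∧ c ∈ interior C ∧ ∀ i, c ∈ P i

/-!
The centre `c` of the partition lies in every piece, so `C` lies in the closed ball of radius
`d_M` about `c`, whence `R ≤ d_M`. For the other bound take a disc of radius `r` in `C` and
the vertices of a regular `(M + 1) k`-gon inscribed in its boundary circle. Some piece contains
`M + 1` of these vertices; since `k ≥ 3`, not all of them can be fewer than `M` steps apart
along the polygon, so that piece contains two vertices at distance at least
`2 r sin (π M / ((M + 1) k))`. Letting `M → ∞` gives `2 r sin (π / k) ≤ d_M`.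
-/

open Filter Real Topology

namespace ZMod

theorem card_le_of_natAbs_valMinAbs_sub_le {N d : ℕ} (hd : 3 * d < N) {S : Finset (ZMod N)}
    (h : ∀ a ∈ S, ∀ b ∈ S, (a - b).valMinAbs.natAbs ≤ d) : S.card ≤ d + 1 := by
  rcases S.eq_empty_or_nonempty with rfl | ⟨a₀, ha₀⟩
  · simp
  have h_inj : InjOn (fun a => (a - a₀).valMinAbs) S := fun a _ b _ hab => by
    simpa using injective_valMinAbs hab
  -- both sides are congruent mod `N` and differ by at most `3 d < N`
  have h_sub : ∀ a ∈ S, ∀ b ∈ S,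
      (a - a₀).valMinAbs - (b - a₀).valMinAbs = (a - b).valMinAbs := by
    intro a ha b hb
    have hcong : (((a - a₀).valMinAbs - (b - a₀).valMinAbs : ℤ) : ZMod N) =
        ((a - b).valMinAbs : ℤ) := by
      simp [coe_valMinAbs]
    rw [intCast_eq_intCast_iff_dvd_sub] at hcong
    have := h a ha a₀ ha₀
    have := h b hb a₀ ha₀
    have := h a ha b hb
    have := Int.eq_zero_of_abs_lt_dvd hcong (by rw [abs_lt]; constructor <;> omega)
    omega
  obtain ⟨m, hm, hm_min⟩ := S.exists_min_image (fun a => (a - a₀).valMinAbs) ⟨a₀, ha₀⟩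
  have hsub : S.image (fun a => (a - a₀).valMinAbs) ⊆
      Finset.Icc (m - a₀).valMinAbs ((m - a₀).valMinAbs + d) := by
    intro x hx
    obtain ⟨a, ha, rfl⟩ := Finset.mem_image.1 hx
    have := h_sub a ha m hm
    have := h a ha m hm
    exact Finset.mem_Icc.2 ⟨hm_min a ha, by omega⟩
  calc S.card = (S.image fun a => (a - a₀).valMinAbs).card :=
        (Finset.card_image_of_injOn h_inj).symm
    _ ≤ _ := Finset.card_le_card hsub
    _ = d + 1 := by rw [Int.card_Icc]; omega

theorem exists_eq_and_le_natAbs_valMinAbs_sub {ι : Type*} [Fintype ι]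
    (hι : 3 ≤ Fintype.card ι) {M N : ℕ} (hN : Fintype.card ι * M < N) (g : ZMod N → ι) :
    ∃ a b, g a = g b ∧ M ≤ (a - b).valMinAbs.natAbs := by
  obtain _ | d := M
  · exact ⟨0, 0, rfl, Nat.zero_le _⟩
  classical
  have : NeZero N := ⟨by omega⟩
  by_contra! hnear
  obtain ⟨i, -, hi⟩ := Finset.exists_lt_card_fiber_of_mul_lt_card_of_maps_to
    (s := Finset.univ) (t := Finset.univ) (f := g) (n := d + 1)
    (fun a _ => Finset.mem_univ _) (by simpa [ZMod.card] using hN)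
  have := card_le_of_natAbs_valMinAbs_sub_le (d := d) (by nlinarith)
    (S := {a | g a = i}) fun a ha b hb => by
      simp only [Finset.mem_filter, Finset.mem_univ, true_and] at ha hb
      exact Nat.lt_succ_iff.1 (hnear a b (ha.trans hb.symm))
  omega

end ZMod

theorem dist_circleMap_circleMap (c : ℂ) (R θ φ : ℝ) :
    dist (circleMap c R θ) (circleMap c R φ) = 2 * |R| * |sin ((θ - φ) / 2)| := by
  have : circleMap c R θ - circleMap c R φ =
      R * Complex.exp (φ * Complex.I) * (Complex.exp (Complex.I * ↑(θ - φ)) - 1) := by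
    simp only [circleMap, mul_sub, mul_assoc, ← Complex.exp_add]
    push_cast
    ring_nf
  rw [dist_eq_norm, this, norm_mul, norm_mul, Complex.norm_exp_I_mul_ofReal_sub_one,
    Complex.norm_exp_ofReal_mul_I, Complex.norm_real, norm_mul, Real.norm_eq_abs,
    Real.norm_eq_abs]
  norm_num
  ring

theorem ZMod.dist_circleMap_val_circleMap_val {N : ℕ} [NeZero N] (c : ℂ) (R : ℝ)
    (a b : ZMod N) :
    dist (circleMap c R (2 * π * a.val / N)) (circleMap c R (2 * π * b.val / N)) =
      2 * |R| * sin (π * (a - b).valMinAbs.natAbs / N) := by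
  have hN : (N : ℝ) ≠ 0 := NeZero.ne _
  obtain ⟨n, hn⟩ : (N : ℤ) ∣ ((a.val : ℤ) - b.val) - (a - b).valMinAbs := by
    rw [← ZMod.intCast_eq_intCast_iff_dvd_sub]
    simp [ZMod.coe_valMinAbs]
  have hangle : (2 * π * a.val / N - 2 * π * b.val / N) / 2 =
      π * (a - b).valMinAbs / N + n * π := by
    have : ((a.val : ℤ) : ℝ) - (b.val : ℤ) = (a - b).valMinAbs + N * n := by
      exact_mod_cast (by linarith : ((a.val : ℤ) - b.val) = (a - b).valMinAbs + N * n)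
    push_cast at this
    field_simp
    linear_combination this
  have hsin_nonneg : 0 ≤ sin (π * (a - b).valMinAbs.natAbs / N) := by
    apply sin_nonneg_of_nonneg_of_le_pi (by positivity)
    rw [div_le_iff₀ (by positivity), mul_le_mul_iff_right₀ pi_pos]
    exact_mod_cast (ZMod.natAbs_valMinAbs_le _).trans (Nat.div_le_self _ _)
  rw [dist_circleMap_circleMap, hangle, sin_add_int_mul_pi, abs_mul, abs_neg_one_zpow, one_mul,
    ← abs_of_nonneg hsin_nonneg]
  have habs : π * (a - b).valMinAbs.natAbs / N = |π * (a - b).valMinAbs / N| := by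
    rw [abs_div, abs_mul, abs_of_pos pi_pos, Nat.abs_cast, Nat.cast_natAbs, Int.cast_abs]
  rw [habs]
  rcases abs_choice (π * (a - b).valMinAbs / N) with h | h <;> rw [h]
  rw [sin_neg, abs_neg]

theorem Metric.dist_le_iSup_diam {α ι : Type*} [PseudoMetricSpace α] [Finite ι]
    {A : ι → Set α} (hA : ∀ i, Bornology.IsBounded (A i)) {i : ι} {x y : α} (hx : x ∈ A i)
    (hy : y ∈ A i) :
    dist x y ≤ ⨆ i, diam (A i) :=
  (dist_le_diam_of_mem (hA i) hx hy).trans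
    (le_ciSup (f := fun i => diam (A i)) (finite_range _).bddAbove i)

theorem tendsto_pi_mul_div_succ_mul (k : ℝ) :
    Tendsto (fun M : ℕ => π * M / ((M + 1) * k)) atTop (𝓝 (π / k)) := by
  have := (tendsto_natCast_div_add_atTop (1 : ℝ)).const_mul (π / k)
  rw [mul_one] at this
  refine this.congr fun M => ?_
  rw [div_mul_div_comm, mul_comm k]

theorem two_mul_mul_sin_pi_div_card_le_iSup_diam {ι : Type*} [Fintype ι]
    (hι : 3 ≤ Fintype.card ι) {A : ι → Set ℂ} (hA : ∀ i, Bornology.IsBounded (A i))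
    {q : ℂ} {r : ℝ} (hr : 0 ≤ r) (hcover : sphere q r ⊆ ⋃ i, A i) :
    2 * r * sin (π / Fintype.card ι) ≤ ⨆ i, diam (A i) := by
  set k := Fintype.card ι
  -- the vertices of a regular `(M + 1) k`-gon inscribed in the circle, colored by the pieces
  have hpolygon : ∀ M : ℕ, 2 * r * sin (π * M / ((M + 1) * k)) ≤ ⨆ i, diam (A i) := by
    intro M
    set N := (M + 1) * k with hN
    have : NeZero N := ⟨by positivity⟩
    have hvertex : ∀ a : ZMod N, ∃ i, circleMap q r (2 * π * a.val / N) ∈ A i := fun a =>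
      mem_iUnion.1 (hcover (circleMap_mem_sphere q hr _))
    choose g hg using hvertex
    obtain ⟨a, b, hab, hM⟩ :=
      ZMod.exists_eq_and_le_natAbs_valMinAbs_sub hι (M := M) (N := N) (by nlinarith) g
    have hN_cast : ((M : ℝ) + 1) * k = N := by push_cast [hN]; ring
    have hhalf : 2 * (a - b).valMinAbs.natAbs ≤ N := by
      have := ZMod.natAbs_valMinAbs_le (a - b); omega
    calc 2 * r * sin (π * M / ((M + 1) * k))
        ≤ 2 * |r| * sin (π * (a - b).valMinAbs.natAbs / N) := by
          rw [abs_of_nonneg hr, hN_cast]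
          gcongr
          apply sin_le_sin_of_le_of_le_pi_div_two
          · have : 0 ≤ π * M / N := by positivity
            linarith [pi_pos]
          · rw [div_le_div_iff₀ (by positivity) two_pos]
            have : (2 * (a - b).valMinAbs.natAbs : ℝ) ≤ N := by exact_mod_cast hhalf
            nlinarith [pi_pos]
          · gcongr
      _ = dist _ _ := (ZMod.dist_circleMap_val_circleMap_val q r a b).symm
      _ ≤ ⨆ i, diam (A i) := dist_le_iSup_diam hA (hg a) (hab ▸ hg b)
  exact le_of_tendsto' (((continuous_sin.tendsto _).comp
    (tendsto_pi_mul_div_succ_mul k)).const_mul (2 * r)) hpolygon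

theorem circumradius_le_of_subset_closedBall {C : Set ℂ} {c : ℂ} {R : ℝ} (hC : C.Nonempty)
    (h : C ⊆ closedBall c R) : circumradius C ≤ R := by
  obtain ⟨x, hx⟩ := hC
  refine csInf_le ⟨0, ?_⟩ ⟨c, h⟩
  rintro R' ⟨c', hc'⟩
  exact dist_nonneg.trans (hc' hx)

theorem mul_inradius_le {C : Set ℂ} {a B : ℝ} (ha : 0 < a) (hB : 0 ≤ B)
    (h : ∀ q r, 0 < r → closedBall q r ⊆ C → a * r ≤ B) : a * inradius C ≤ B := by
  rw [← le_div_iff₀' ha]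
  refine Real.sSup_le ?_ (by positivity)
  rintro r ⟨q, hq⟩
  rcases le_or_gt r 0 with hr | hr
  · exact hr.trans (by positivity)
  · exact (le_div_iff₀' ha).2 (h q r hr hq)

/-- The standard `k`-partition is a minimizing `k`-partition for the maximum relative
diameter: every `k`-partition (`k ≥ 3`) of a `k`-rotationally symmetric planar convex
body has maximum relative diameter at least `max {R, 2·r·sin(π/k)}`, which is the
maximum relative diameter of the standard `k`-partition. -/
theorem standardPartition_isMinimizing_partition
    (k : ℕ) (hk : 3 ≤ k) (p : ℂ) (C : Set ℂ) (hC : IsRotSymConvexBody k p C)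
    (P : Fin k → Set ℂ) (c : ℂ) (hP : IsPartition C k P c) :
    max (circumradius C) (2 * inradius C * Real.sin (Real.pi / k)) ≤
      ⨆ i, Metric.diam (P i) := by
  obtain ⟨⟨hsub, -, hcover, -⟩, hc, hcP⟩ := hP
  have hbdd : ∀ i, Bornology.IsBounded (P i) := fun i => hC.1.isBounded.subset (hsub i)
  have hD : 0 ≤ ⨆ i, diam (P i) := Real.iSup_nonneg fun i => diam_nonneg
  refine max_le (circumradius_le_of_subset_closedBall (c := c) ⟨c, interior_subset hc⟩
    fun x hx => ?_) ?_
  · rw [← hcover, mem_iUnion] at hx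
    obtain ⟨i, hi⟩ := hx
    exact dist_le_iSup_diam hbdd hi (hcP i)
  · have hsin : 0 < sin (π / k) :=
      sin_pos_of_pos_of_lt_pi (by positivity) (div_lt_self pi_pos (by norm_cast; omega))
    rw [mul_right_comm]
    refine mul_inradius_le (by positivity) hD fun q r hr hball => ?_
    rw [mul_right_comm]
    have hk' : 3 ≤ Fintype.card (Fin k) := by simpa using hk
    simpa using two_mul_mul_sin_pi_div_card_le_iSup_diam hk' hbdd hr.le
      (sphere_subset_closedBall.trans (hball.trans hcover.symm.subset))
end

section
/- Let k ≥ 3 be an integer and let C be a k-rotationally symmetric planar convex body with center of symmetry p and inradius r. Then C is contained in a regular k-gon with inradius r centered at p: there exists an angle θ such that C ⊆ {x ∈ ℝ² : ⟨x − p, u_j⟩ ≤ r for all j = 0, …, k−1}, where u_j is the unit vector (cos(θ + 2πj/k), sin(θ + 2πj/k)). -/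
open Metric Set

/-!
Some point `q ∉ interior C` lies within distance `r` of `p`: otherwise the compact disc of radius
`r` about `p` would sit inside the open set `interior C`, and so would a slightly larger disc.
A supporting half-plane of `C` at `q` has its boundary line within distance `r` of `p`, and since
`C` is invariant under the rotation about `p` by `2π/k`, its `k` rotations about `p` contain `C` too.
-/

open ComplexConjugate

lemma Complex.norm_exp_two_pi_I_div (k : ℕ) : ‖exp (2 * Real.pi * I / k)‖ = 1 := by
  rw [norm_exp]
  simp

lemma Complex.inner_mul_mul_of_norm_eq_one {a : ℂ} (ha : ‖a‖ = 1) (w z : ℂ) :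
    inner ℝ (a * w) (a * z) = inner ℝ w z := by
  rw [Complex.inner, Complex.inner, map_mul,
    show a * z * (conj a * conj w) = a * conj a * (z * conj w) by ring,
    Complex.mul_conj, Complex.normSq_eq_norm_sq, ha]
  simp

lemma planeRotation_iterate (k : ℕ) (p z : ℂ) (j : ℕ) :
    (planeRotation k p)^[j] z = p + Complex.exp (2 * Real.pi * Complex.I / k) ^ j * (z - p) := by
  induction j with
  | zero => simp
  | succ j ih => rw [Function.iterate_succ_apply', ih, planeRotation]; ring

lemma image_iterate_planeRotation_eq {k : ℕ} {p : ℂ} {C : Set ℂ}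
    (h : planeRotation k p '' C = C) (j : ℕ) : (planeRotation k p)^[j] '' C = C := by
  rw [image_iterate_eq]
  exact Function.iterate_fixed h j

section inradius

variable {C : Set ℂ}

lemma bddAbove_radii_of_isBounded (hC : Bornology.IsBounded C) :
    BddAbove {r : ℝ | ∃ c : ℂ, closedBall c r ⊆ C} := by
  refine ⟨diam C, ?_⟩
  rintro t ⟨c, hc⟩
  rcases lt_or_ge t 0 with ht | ht
  · exact ht.le.trans diam_nonneg
  · calc t ≤ 2 * t := by linarith
      _ = diam (closedBall c t) := (diam_closedBall_eq c ht).symm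
      _ ≤ diam C := diam_mono hc hC

lemma le_inradius (hC : Bornology.IsBounded C) {c : ℂ} {t : ℝ} (h : closedBall c t ⊆ C) :
    t ≤ inradius C :=
  le_csSup (bddAbove_radii_of_isBounded hC) ⟨c, h⟩

lemma inradius_nonneg (hC : Bornology.IsBounded C) : 0 ≤ inradius C := by
  by_contra! h
  have := le_inradius hC (c := 0) (t := inradius C / 2)
    (by rw [closedBall_eq_empty.2 (by linarith)]; exact empty_subset C)
  linarith

lemma exists_dist_le_inradius_notMem_interior (hC : Bornology.IsBounded C) (p : ℂ) :
    ∃ q ∉ interior C, dist p q ≤ inradius C := by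
  by_contra! h
  have hsub : closedBall p (inradius C) ⊆ interior C := fun q hq => by
    by_contra hq'
    exact (h q hq').not_ge (by rwa [dist_comm, ← mem_closedBall])
  obtain ⟨δ, hδ, hδsub⟩ :=
    (isCompact_closedBall p (inradius C)).exists_cthickening_subset_open isOpen_interior hsub
  rw [cthickening_closedBall hδ.le (inradius_nonneg hC)] at hδsub
  linarith [le_inradius hC (hδsub.trans interior_subset)]

end inradius

lemma exists_norm_eq_one_inner_le_of_notMem_interior {E : Type*} [NormedAddCommGroup E]
    [InnerProductSpace ℝ E] [CompleteSpace E] {C : Set E} (hC : Convex ℝ C)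
    (hint : (interior C).Nonempty) {q : E} (hq : q ∉ interior C) :
    ∃ u : E, ‖u‖ = 1 ∧ ∀ y ∈ C, inner ℝ u y ≤ inner ℝ u q := by
  obtain ⟨f, hf⟩ := geometric_hahn_banach_open_point hC.interior isOpen_interior hq
  have hle : ∀ y ∈ C, f y ≤ f q := by
    have : closure (interior C) ⊆ {y | f y ≤ f q} :=
      closure_minimal (fun a ha => (hf a ha).le) (isClosed_le f.continuous continuous_const)
    rw [hC.closure_interior_eq_closure_of_nonempty_interior hint] at this
    exact fun y hy => this (subset_closure hy)
  have hf0 : f ≠ 0 := by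
    rintro rfl
    obtain ⟨a, ha⟩ := hint
    simpa using hf a ha
  set v := (InnerProductSpace.toDual ℝ E).symm f
  have hv : v ≠ 0 := by simpa [v] using hf0
  refine ⟨(‖v‖⁻¹ : ℝ) • v, norm_smul_inv_norm hv, fun y hy => ?_⟩
  rw [real_inner_smul_left, real_inner_smul_left, InnerProductSpace.toDual_symm_apply,
    InnerProductSpace.toDual_symm_apply]
  exact mul_le_mul_of_nonneg_left (hle y hy) (by positivity)

theorem subset_regularKGon_of_inradius_general
    (k : ℕ) (p : ℂ) (C : Set ℂ) (hC : IsRotSymConvexBody k p C) :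
    ∃ θ : ℝ, C ⊆ {x : ℂ | ∀ j < k,
      ((x - p) * (starRingEnd ℂ)
        (Complex.exp (((θ + 2 * Real.pi * j / k : ℝ) : ℂ) * Complex.I))).re
        ≤ inradius C} := by
  obtain ⟨hcomp, hconv, hint, hrot⟩ := hC
  obtain ⟨q, hq, hpq⟩ := exists_dist_le_inradius_notMem_interior hcomp.isBounded p
  obtain ⟨u, hu, hsupp⟩ := exists_norm_eq_one_inner_le_of_notMem_interior hconv hint hq
  refine ⟨Complex.arg u, fun x hx j _ => ?_⟩
  rw [← image_iterate_planeRotation_eq hrot j] at hx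
  obtain ⟨y, hy, rfl⟩ := hx
  set ω := Complex.exp (2 * Real.pi * Complex.I / k)
  have hdir : Complex.exp (((Complex.arg u + 2 * Real.pi * j / k : ℝ) : ℂ) * Complex.I)
      = ω ^ j * u := by
    rw [show ((Complex.arg u + 2 * Real.pi * j / k : ℝ) : ℂ) * Complex.I
        = j * (2 * Real.pi * Complex.I / k) + Complex.arg u * Complex.I by push_cast; ring,
      Complex.exp_add, Complex.exp_nat_mul]
    rw [show Complex.exp (Complex.arg u * Complex.I) = u by
      simpa [hu] using Complex.norm_mul_exp_arg_mul_I u]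
  rw [← Complex.inner, hdir, planeRotation_iterate, add_sub_cancel_left,
    Complex.inner_mul_mul_of_norm_eq_one (by rw [norm_pow, Complex.norm_exp_two_pi_I_div, one_pow])]
  calc inner ℝ u (y - p) ≤ inner ℝ u (q - p) := by
        simpa only [inner_sub_right] using sub_le_sub_right (hsupp y hy) _
    _ ≤ ‖u‖ * ‖q - p‖ := real_inner_le_norm _ _
    _ ≤ inradius C := by rwa [hu, one_mul, ← dist_eq_norm, dist_comm]

/-- A `k`-rotationally symmetric planar convex body `C` (`k ≥ 3`) with center of
symmetry `p` and inradius `r` is contained in a regular `k`-gon with inradius `r`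
centered at `p`: for some orientation `θ`, for every `x ∈ C` and every
`j = 0, …, k−1` the inner product `⟨x − p, u_j⟩` (computed in the plane `ℂ` as
`Re((x − p)·conj u_j)`) is at most `r`, where `u_j = e^{i(θ + 2πj/k)}` is the
corresponding unit vector `(cos(θ + 2πj/k), sin(θ + 2πj/k))`. -/
theorem subset_regularKGon_of_inradius
    (k : ℕ) (hk : 3 ≤ k) (p : ℂ) (C : Set ℂ) (hC : IsRotSymConvexBody k p C) :
    ∃ θ : ℝ, C ⊆ {x : ℂ | ∀ j < k,
      ((x - p) * (starRingEnd ℂ)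
        (Complex.exp (((θ + 2 * Real.pi * j / k : ℝ) : ℂ) * Complex.I))).re
        ≤ inradius C} :=
  subset_regularKGon_of_inradius_general k p C hC
end
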